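/- The sequence o(ℓ), the number of ODD colored compositions of ℓ, satisfies o(1) = 1, o(2) = 3, o(3) = 7, and o(n) = 3·o(n−1) − 2·o(n−2) + o(n−3) for all n ≥ 4. -/

import Mathlib

/-!
Removing the first part `p` of a composition of `n + 1` leaves a composition of `n + 1 - p` in
which the parity of every position is flipped. Writing `e` for the analogous count with colors on
the even positions, this gives `o (n + 1) = ∑ k ≤ n, (n + 1 - k) e k` and `e (n + 1) = ∑ k ≤ n, o k`.
Taking differences turns these into `o (n + 2) - o (n + 1) = ∑ k ≤ n + 1, e k` and
`e (n + 2) - e (n + 1) = o (n + 1)`, and eliminating `e` leaves the third-order recurrence.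
-/

/-- The number of ODD colored compositions of `ℓ`: compositions where each part
in an odd position `i` (positions counted from 1) gets a color in `{1, …, pᵢ}`,
i.e. `∑` over compositions of `∏` of the parts in odd positions. -/
def oddColoredCount (ℓ : ℕ) : ℕ :=
  ∑ c : Composition ℓ, ∏ i ∈ Finset.range c.blocks.length,
    if (i + 1) % 2 = 1 then c.blocks.getD i 1 else 1

open Finset

namespace Composition

def consBlock (n : ℕ) (x : Σ k : Fin (n + 1), Composition k) : Composition (n + 1) where
  blocks := (n + 1 - x.1) :: x.2.blocks
  blocks_pos {i} hi := by
    rcases List.mem_cons.mp hi with rfl | hi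
    · exact Nat.sub_pos_of_lt x.1.isLt
    · exact x.2.blocks_pos hi
  blocks_sum := by
    rw [List.sum_cons, x.2.blocks_sum]
    exact Nat.sub_add_cancel x.1.isLt.le

theorem consBlock_injective (n : ℕ) : Function.Injective (consBlock n) := by
  rintro ⟨k, c⟩ ⟨k', c'⟩ h
  obtain ⟨hhead, htail⟩ := List.cons_eq_cons.mp (congrArg blocks h)
  obtain rfl : k = k' := Fin.ext (by have := k.isLt; have := k'.isLt; simp only at hhead; omega)
  obtain rfl : c = c' := Composition.ext htail
  rfl

theorem consBlock_surjective (n : ℕ) : Function.Surjective (consBlock n) := by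
  rintro ⟨_ | ⟨p, t⟩, hpos, hsum⟩
  · simp at hsum
  have hp : 0 < p := hpos List.mem_cons_self
  rw [List.sum_cons] at hsum
  refine ⟨⟨⟨t.sum, by omega⟩, ⟨t, fun hi => hpos (List.mem_cons_of_mem p hi), rfl⟩⟩, ?_⟩
  ext1
  simp only [consBlock, List.cons.injEq, and_true]
  omega

theorem sum_succ {M : Type*} [AddCommMonoid M] (n : ℕ) (f : List ℕ → M) :
    ∑ c : Composition (n + 1), f c.blocks =
      ∑ k ∈ range (n + 1), ∑ c : Composition k, f ((n + 1 - k) :: c.blocks) := by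
  rw [← Fin.sum_univ_eq_sum_range (fun k => ∑ c : Composition k, f ((n + 1 - k) :: c.blocks)),
    ← Fintype.sum_sigma']
  exact (Fintype.sum_bijective _ ⟨consBlock_injective n, consBlock_surjective n⟩ _ _
    fun _ => rfl).symm

end Composition

def oddPartsProd (l : List ℕ) : ℕ :=
  ∏ i ∈ range l.length, if (i + 1) % 2 = 1 then l.getD i 1 else 1

def evenPartsProd (l : List ℕ) : ℕ :=
  ∏ i ∈ range l.length, if (i + 1) % 2 = 0 then l.getD i 1 else 1

theorem oddPartsProd_cons (p : ℕ) (l : List ℕ) :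
    oddPartsProd (p :: l) = p * evenPartsProd l := by
  simp [oddPartsProd, evenPartsProd, prod_range_succ', Nat.succ_mod_two_eq_one_iff, mul_comm]

theorem evenPartsProd_cons (p : ℕ) (l : List ℕ) : evenPartsProd (p :: l) = oddPartsProd l := by
  simp [oddPartsProd, evenPartsProd, prod_range_succ', Nat.succ_mod_two_eq_zero_iff]

def evenColoredCount (ℓ : ℕ) : ℕ :=
  ∑ c : Composition ℓ, evenPartsProd c.blocks

theorem oddColoredCount_eq_sum_oddPartsProd (ℓ : ℕ) :
    oddColoredCount ℓ = ∑ c : Composition ℓ, oddPartsProd c.blocks := rfl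

@[simp]
theorem oddColoredCount_zero : oddColoredCount 0 = 1 := rfl

@[simp]
theorem evenColoredCount_zero : evenColoredCount 0 = 1 := rfl

theorem oddColoredCount_succ (n : ℕ) :
    oddColoredCount (n + 1) = ∑ k ∈ range (n + 1), (n + 1 - k) * evenColoredCount k := by
  simp only [oddColoredCount_eq_sum_oddPartsProd, Composition.sum_succ, oddPartsProd_cons,
    evenColoredCount, mul_sum]

theorem evenColoredCount_succ (n : ℕ) :
    evenColoredCount (n + 1) = ∑ k ∈ range (n + 1), oddColoredCount k := by
  simp only [evenColoredCount, Composition.sum_succ, evenPartsProd_cons,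
    oddColoredCount_eq_sum_oddPartsProd]

theorem evenColoredCount_add_two (n : ℕ) :
    evenColoredCount (n + 2) = evenColoredCount (n + 1) + oddColoredCount (n + 1) := by
  rw [evenColoredCount_succ, evenColoredCount_succ, sum_range_succ]

theorem oddColoredCount_add_two (n : ℕ) :
    oddColoredCount (n + 2) =
      oddColoredCount (n + 1) + ∑ k ∈ range (n + 2), evenColoredCount k := by
  have hcoeff : ∀ k ∈ range (n + 2), (n + 2 - k) * evenColoredCount k =
      (n + 1 - k) * evenColoredCount k + evenColoredCount k := fun k hk => by
    have := mem_range.mp hk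
    rw [← add_one_mul]; congr 1; omega
  rw [oddColoredCount_succ, oddColoredCount_succ, sum_congr rfl hcoeff, sum_add_distrib,
    sum_range_succ (fun k => (n + 1 - k) * evenColoredCount k), Nat.sub_self, zero_mul, add_zero]

theorem oddColoredCount_add_four (n : ℕ) :
    oddColoredCount (n + 4) + 2 * oddColoredCount (n + 2) =
      3 * oddColoredCount (n + 3) + oddColoredCount (n + 1) := by
  have h2 := oddColoredCount_add_two n
  have h3 : oddColoredCount (n + 3) = oddColoredCount (n + 2) +
      ((∑ k ∈ range (n + 2), evenColoredCount k) + evenColoredCount (n + 2)) := by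
    rw [← sum_range_succ]; exact oddColoredCount_add_two (n + 1)
  have h4 : oddColoredCount (n + 4) = oddColoredCount (n + 3) +
      ((∑ k ∈ range (n + 2), evenColoredCount k) + evenColoredCount (n + 2) +
        evenColoredCount (n + 3)) := by
    rw [← sum_range_succ, ← sum_range_succ]; exact oddColoredCount_add_two (n + 2)
  have he : evenColoredCount (n + 3) = evenColoredCount (n + 2) + oddColoredCount (n + 2) :=
    evenColoredCount_add_two (n + 1)
  omega

/-- `o(1) = 1`, `o(2) = 3`, `o(3) = 7`, and `o(n) = 3o(n-1) - 2o(n-2) + o(n-3)`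
for all `n ≥ 4` (stated in `ℤ` so that subtraction is honest). -/
theorem oddColoredCount_recurrence :
    oddColoredCount 1 = 1 ∧ oddColoredCount 2 = 3 ∧ oddColoredCount 3 = 7 ∧
    ∀ n : ℕ, 4 ≤ n →
      (oddColoredCount n : ℤ) =
        3 * oddColoredCount (n - 1) - 2 * oddColoredCount (n - 2)
          + oddColoredCount (n - 3) := by
  refine ⟨?_, ?_, ?_, fun n hn => ?_⟩
  iterate 3 simp [oddColoredCount_succ, evenColoredCount_succ, sum_range_succ]
  obtain ⟨m, rfl⟩ := Nat.exists_eq_add_of_le' hn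
  simp only [Nat.reduceSubDiff]
  have := oddColoredCount_add_four m
  omega
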